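/- Let X be an additively symmetric subset of a ring (not assumed to be an approximate subring), and suppose there exists a ring homomorphism f : ⟨X⟩ → S to a locally compact Hausdorff topological ring S such that f[X] has compact closure in S and there exist a neighborhood U of 0 in S and m ∈ ℕ with f⁻¹[U] ⊆ X_m. Then X_m is an approximate subring for some m. -/

import Mathlib

open Pointwise

/-- A subset of a (not necessarily unital or commutative) ring is additively symmetric
if it contains `0` and `-X = X`. -/
def AddSymmetric {R : Type*} [NonUnitalRing R] (X : Set R) : Prop :=
  (0 : R) ∈ X ∧ -X = X

/-- `X` is an approximate subring if it is additively symmetric and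
`X·X ∪ (X+X) ⊆ F + X` for some finite subset `F` of the subring generated by `X`. -/
def IsApproxSubring {R : Type*} [NonUnitalRing R] (X : Set R) : Prop :=
  AddSymmetric X ∧ ∃ F : Set R, F.Finite ∧ F ⊆ (NonUnitalSubring.closure X : Set R) ∧
    X * X ∪ (X + X) ⊆ F + X

/-- The sequence `X_0 := X`, `X_{n+1} := X_n·X_n + (X_n + X_n)`. -/
def XSeq {R : Type*} [NonUnitalRing R] (X : Set R) : ℕ → Set R
  | 0 => X
  | n + 1 => XSeq X n * XSeq X n + (XSeq X n + XSeq X n)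

/-! Since `0 ∈ X_m`, both `X_m·X_m` and `X_m + X_m` lie in `X_{m+1}`, so it suffices to cover
`X_{m+1}` by finitely many translates `a + X_m` with `a ∈ X_{m+1}`. The image `f[X_{m+1}]` lies in
the compact set obtained from `closure f[X]` by the same recursion, so its closure is covered by
finitely many translates `f a + interior U`; pulling back along `f` puts every element of
`X_{m+1}` into some `a + f⁻¹[U] ⊆ a + X_m`. -/

section XSeq

variable {R : Type*} [NonUnitalRing R]

theorem xSeq_succ (X : Set R) (n : ℕ) :
    XSeq X (n + 1) = XSeq X n * XSeq X n + (XSeq X n + XSeq X n) := rfl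

theorem AddSymmetric.xSeq {X : Set R} (hX : AddSymmetric X) (n : ℕ) :
    AddSymmetric (XSeq X n) := by
  induction n with
  | zero => exact hX
  | succ n ih =>
    obtain ⟨hzero, hneg⟩ := ih
    refine ⟨?_, ?_⟩
    · rw [xSeq_succ]
      simpa using Set.add_mem_add (Set.mul_mem_mul hzero hzero) (Set.add_mem_add hzero hzero)
    · rw [xSeq_succ, neg_add, neg_add, ← neg_mul, hneg]

theorem mul_union_add_subset_xSeq_succ {X : Set R} {n : ℕ} (hzero : (0 : R) ∈ XSeq X n) :
    XSeq X n * XSeq X n ∪ (XSeq X n + XSeq X n) ⊆ XSeq X (n + 1) := by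
  rw [xSeq_succ]
  refine Set.union_subset (fun x hx => ?_) (fun x hx => ?_)
  · simpa using Set.add_mem_add hx (Set.add_mem_add hzero hzero)
  · simpa using Set.add_mem_add (Set.mul_mem_mul hzero hzero) hx

theorem xSeq_subset_closure (X : Set R) (n : ℕ) :
    XSeq X n ⊆ NonUnitalSubring.closure X := by
  induction n with
  | zero => exact NonUnitalSubring.subset_closure
  | succ n ih =>
    rintro _ ⟨_, ⟨a, ha, b, hb, rfl⟩, _, ⟨c, hc, d, hd, rfl⟩, rfl⟩
    exact add_mem (mul_mem (ih ha) (ih hb)) (add_mem (ih hc) (ih hd))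

theorem xSeq_succ_subset_closure (X : Set R) (n : ℕ) :
    XSeq X (n + 1) ⊆ NonUnitalSubring.closure (XSeq X n) := by
  rw [xSeq_succ]
  exact xSeq_subset_closure (XSeq X n) 1

theorem xSeq_mono {X Y : Set R} (h : X ⊆ Y) (n : ℕ) : XSeq X n ⊆ XSeq Y n := by
  induction n with
  | zero => exact h
  | succ n ih => exact Set.add_subset_add (Set.mul_subset_mul ih ih) (Set.add_subset_add ih ih)

theorem image_xSeq {S : Type*} [NonUnitalRing S] (f : R →ₙ+* S) (X : Set R) (n : ℕ) :
    f '' XSeq X n = XSeq (f '' X) n := by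
  induction n with
  | zero => rfl
  | succ n ih => rw [xSeq_succ, xSeq_succ, Set.image_add, Set.image_mul, Set.image_add, ih]

theorem IsCompact.xSeq [TopologicalSpace R] [ContinuousAdd R] [ContinuousMul R] {K : Set R}
    (hK : IsCompact K) (n : ℕ) : IsCompact (XSeq K n) := by
  induction n with
  | zero => exact hK
  | succ n ih => exact (ih.mul ih).add (ih.add ih)

end XSeq

theorem exists_finite_subset_add_of_isCompact_closure_image {G H : Type*} [AddGroup G]
    [AddGroup H] [TopologicalSpace H] [IsTopologicalAddGroup H] (f : G →+ H) {A B : Set G}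
    (hA : IsCompact (closure (f '' A))) {U : Set H} (hU : U ∈ nhds 0) (hB : f ⁻¹' U ⊆ B) :
    ∃ F ⊆ A, F.Finite ∧ A ⊆ F + B := by
  have hV : IsOpen (interior U) := isOpen_interior
  have hcover : closure (f '' A) ⊆ ⋃ a ∈ A, (-f a + ·) ⁻¹' interior U := by
    intro y hy
    have hnhds : (-· + y) ⁻¹' interior U ∈ nhds y :=
      (continuous_neg.add continuous_const).continuousAt.preimage_mem_nhds
        (hV.mem_nhds (by simpa using mem_interior_iff_mem_nhds.mpr hU))
    obtain ⟨_, hya, a, ha, rfl⟩ := mem_closure_iff_nhds.mp hy _ hnhds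
    exact Set.mem_biUnion ha hya
  obtain ⟨F, hFA, hF, hcoverF⟩ := hA.elim_finite_subcover_image
    (fun a _ => hV.preimage (continuous_const.add continuous_id)) hcover
  refine ⟨F, hFA, hF, fun x hx => ?_⟩
  obtain ⟨a, ha, hxa⟩ := Set.mem_iUnion₂.mp (hcoverF (subset_closure ⟨x, hx, rfl⟩))
  have hxaB : -a + x ∈ B := hB (by simpa using interior_subset hxa)
  exact ⟨a, ha, -a + x, hxaB, add_neg_cancel_left a x⟩

theorem XSeq_approx_subring_of_locally_compact_model_general
    {R S : Type*} [NonUnitalRing R] [NonUnitalRing S] [TopologicalSpace S]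
    [IsTopologicalRing S]
    (X : Set R) (hsym : AddSymmetric X)
    (f : R →ₙ+* S) (hcomp : IsCompact (closure (⇑f '' X)))
    (U : Set S) (hU : U ∈ nhds (0 : S)) (m : ℕ) (hm : ⇑f ⁻¹' U ⊆ XSeq X m) :
    ∃ n : ℕ, IsApproxSubring (XSeq X n) := by
  have hsymm : AddSymmetric (XSeq X m) := hsym.xSeq m
  have himage : IsCompact (closure (f '' XSeq X (m + 1))) :=
    (hcomp.xSeq (m + 1)).closure_of_subset <| by
      rw [image_xSeq]
      exact xSeq_mono subset_closure (m + 1)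
  obtain ⟨F, hFsub, hF, hcover⟩ :=
    exists_finite_subset_add_of_isCompact_closure_image f.toAddMonoidHom himage hU hm
  exact ⟨m, hsymm, F, hF, hFsub.trans (xSeq_succ_subset_closure X m),
    (mul_union_add_subset_xSeq_succ hsymm.1).trans hcover⟩

/-- Let `X` be an additively symmetric subset of a ring generated by `X` (not assumed
to be an approximate subring), and suppose there is a ring homomorphism `f : R →ₙ+* S`
to a locally compact Hausdorff topological ring such that `f[X]` has compact closure
and `f⁻¹[U] ⊆ X_m` for some neighborhood `U` of `0` and some `m`. Then `X_n` is an
approximate subring for some `n`. -/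
theorem XSeq_approx_subring_of_locally_compact_model
    {R S : Type*} [NonUnitalRing R] [NonUnitalRing S] [TopologicalSpace S]
    [IsTopologicalRing S] [LocallyCompactSpace S] [T2Space S]
    (X : Set R) (hsym : AddSymmetric X) (hgen : NonUnitalSubring.closure X = ⊤)
    (f : R →ₙ+* S) (hcomp : IsCompact (closure (⇑f '' X)))
    (U : Set S) (hU : U ∈ nhds (0 : S)) (m : ℕ) (hm : ⇑f ⁻¹' U ⊆ XSeq X m) :
    ∃ n : ℕ, IsApproxSubring (XSeq X n) :=
  XSeq_approx_subring_of_locally_compact_model_general X hsym f hcomp U hU m hm
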